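/- arXiv:1210.3842 — 4 statements merged into one kernel-verified Lean document; each statement's English description precedes it below -/
import Mathlib

section
/- There exists a constant C > 0 such that for every integer p ≥ 2 and every θ ∈ (0, π), defining Z_p^d(θ) = p·[sin(pθ)·(1 − cos θ)/sin θ + cos(pθ) + sin((p−1)θ)/(p·sin θ)], one has |Z_p^d(θ)| ≤ C·p·(1 + pθ). -/
open Real

lemma abs_sin_nat_mul_le (n : ℕ) (x : ℝ) : |sin ((n : ℝ) * x)| ≤ (n : ℝ) * |sin x| := by
  induction n with
  | zero => simp
  | succ n ih =>
    have : ((n : ℝ) + 1) * x = (n : ℝ) * x + x := by ring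
    push_cast
    rw [this, sin_add]
    calc |sin ((n:ℝ)*x) * cos x + cos ((n:ℝ)*x) * sin x|
        ≤ |sin ((n:ℝ)*x) * cos x| + |cos ((n:ℝ)*x) * sin x| := abs_add_le _ _
      _ ≤ |sin ((n:ℝ)*x)| * 1 + 1 * |sin x| := by
          rw [abs_mul, abs_mul]
          gcongr <;> first | exact abs_cos_le_one _ | exact abs_nonneg _
      _ ≤ ((n : ℝ) + 1) * |sin x| := by nlinarith [ih, abs_nonneg (sin x)]

/-- First-difference zonal estimate: there is `C > 0` such that for all `p ≥ 2`
and `θ ∈ (0, π)`,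
`Z_p^d(θ) = p·[sin(pθ)·(1 − cos θ)/sin θ + cos(pθ) + sin((p−1)θ)/(p·sin θ)]`
satisfies `|Z_p^d(θ)| ≤ C·p·(1 + pθ)`. -/
theorem zonal_first_difference_bound :
    ∃ C > 0, ∀ (p : ℕ), 2 ≤ p → ∀ θ ∈ Set.Ioo (0 : ℝ) π,
      |(p : ℝ) * (sin ((p : ℝ) * θ) * (1 - cos θ) / sin θ + cos ((p : ℝ) * θ)
          + sin (((p : ℝ) - 1) * θ) / ((p : ℝ) * sin θ))|
        ≤ C * (p : ℝ) * (1 + (p : ℝ) * θ) := by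
  refine ⟨3, by norm_num, ?_⟩
  intro p hp θ ⟨hθ0, hθπ⟩
  have hs : 0 < sin θ := sin_pos_of_pos_of_lt_pi hθ0 hθπ
  have hp1 : (1 : ℝ) ≤ (p : ℝ) := by exact_mod_cast Nat.one_le_of_lt hp
  have hp2 : (2 : ℝ) ≤ (p : ℝ) := by exact_mod_cast hp
  have hpθ : 0 ≤ (p : ℝ) * θ := by positivity
  -- bound on third term
  have hcast : ((p : ℝ) - 1) = ((p - 1 : ℕ) : ℝ) := by
    have : 1 ≤ p := by omega
    push_cast [this]; ring
  have h3 : |sin (((p : ℝ) - 1) * θ)| ≤ ((p : ℝ) - 1) * sin θ := by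
    rw [hcast]
    have := abs_sin_nat_mul_le (p - 1) θ
    rwa [abs_of_pos hs] at this
  have h3' : |sin (((p : ℝ) - 1) * θ) / ((p : ℝ) * sin θ)| ≤ 1 := by
    rw [abs_div]
    rw [div_le_one (by positivity : (0:ℝ) < |(p : ℝ) * sin θ|)]
    rw [abs_of_pos (by positivity : (0:ℝ) < (p : ℝ) * sin θ)]
    calc |sin (((p : ℝ) - 1) * θ)| ≤ ((p : ℝ) - 1) * sin θ := h3
      _ ≤ (p : ℝ) * sin θ := by nlinarith
  have h2 : |cos ((p : ℝ) * θ)| ≤ 1 := abs_cos_le_one _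
  have hcos : 1 - cos θ ≤ 2 := by nlinarith [neg_one_le_cos θ]
  have hcos0 : 0 ≤ 1 - cos θ := by nlinarith [cos_le_one θ]
  have habs : ∀ a b c : ℝ, |a + b + c| ≤ |a| + |b| + |c| := fun a b c => by
    calc |a + b + c| ≤ |a + b| + |c| := abs_add_le _ _
      _ ≤ |a| + |b| + |c| := by gcongr; exact abs_add_le _ _
  rcases le_or_gt θ (π / 2) with hθ | hθ
  · -- small θ : 1 - cos θ ≤ sin θ
    have hkey : 1 - cos θ ≤ sin θ := by
      have e1 := cos_two_mul (θ/2)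
      have e2 := sin_two_mul (θ/2)
      rw [show 2*(θ/2) = θ by ring] at e1 e2
      have pyth := sin_sq_add_cos_sq (θ/2)
      have hs2 : 0 ≤ sin (θ/2) := sin_nonneg_of_nonneg_of_le_pi (by linarith) (by linarith [pi_pos])
      have hc2 : sin (θ/2) ≤ cos (θ/2) := by
        rw [← cos_pi_div_two_sub]
        apply cos_le_cos_of_nonneg_of_le_pi (by linarith) (by linarith [pi_pos])
        linarith
      nlinarith [sq_nonneg (sin (θ/2))]
    have h1 : |sin ((p : ℝ) * θ) * (1 - cos θ) / sin θ| ≤ 1 := by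
      rw [abs_div, div_le_one (by positivity : (0:ℝ) < |sin θ|), abs_of_pos hs, abs_mul,
          abs_of_nonneg hcos0]
      calc |sin ((p : ℝ) * θ)| * (1 - cos θ) ≤ 1 * sin θ := by
            apply mul_le_mul (abs_sin_le_one _) hkey hcos0 zero_le_one
        _ = sin θ := one_mul _
    calc |(p : ℝ) * (sin ((p : ℝ) * θ) * (1 - cos θ) / sin θ + cos ((p : ℝ) * θ)
          + sin (((p : ℝ) - 1) * θ) / ((p : ℝ) * sin θ))|
        = (p : ℝ) * |sin ((p : ℝ) * θ) * (1 - cos θ) / sin θ + cos ((p : ℝ) * θ)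
          + sin (((p : ℝ) - 1) * θ) / ((p : ℝ) * sin θ)| := by
          rw [abs_mul, abs_of_pos (by positivity : (0:ℝ) < (p:ℝ))]
      _ ≤ (p : ℝ) * (1 + 1 + 1) := by
          gcongr
          calc |_| ≤ _ := habs _ _ _
            _ ≤ 1 + 1 + 1 := by gcongr
      _ ≤ 3 * (p : ℝ) * (1 + (p : ℝ) * θ) := by
          nlinarith [mul_nonneg hpθ (le_trans zero_le_one hp1)]
  · -- large θ : use |sin(pθ)| ≤ p sin θ
    have hsp : |sin ((p : ℝ) * θ)| ≤ (p : ℝ) * sin θ := by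
      have := abs_sin_nat_mul_le p θ
      rwa [abs_of_pos hs] at this
    have h1 : |sin ((p : ℝ) * θ) * (1 - cos θ) / sin θ| ≤ 2 * (p : ℝ) := by
      rw [abs_div, div_le_iff₀ (by positivity : (0:ℝ) < |sin θ|), abs_of_pos hs, abs_mul,
          abs_of_nonneg hcos0]
      calc |sin ((p : ℝ) * θ)| * (1 - cos θ) ≤ ((p : ℝ) * sin θ) * 2 := by
            apply mul_le_mul hsp hcos hcos0 (by positivity)
        _ = 2 * (p:ℝ) * sin θ := by ring
    have hπθ : π ≤ (p : ℝ) * θ := by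
      calc π = 2 * (π/2) := by ring
        _ ≤ (p : ℝ) * θ := by
            apply mul_le_mul hp2 (le_of_lt hθ) (by linarith [pi_pos]) (by linarith)
    have hpi : (3 : ℝ) ≤ π := by linarith [pi_gt_three]
    calc |(p : ℝ) * (sin ((p : ℝ) * θ) * (1 - cos θ) / sin θ + cos ((p : ℝ) * θ)
          + sin (((p : ℝ) - 1) * θ) / ((p : ℝ) * sin θ))|
        = (p : ℝ) * |sin ((p : ℝ) * θ) * (1 - cos θ) / sin θ + cos ((p : ℝ) * θ)
          + sin (((p : ℝ) - 1) * θ) / ((p : ℝ) * sin θ)| := by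
          rw [abs_mul, abs_of_pos (by positivity : (0:ℝ) < (p:ℝ))]
      _ ≤ (p : ℝ) * (2 * (p : ℝ) + 1 + 1) := by
          gcongr
          calc |_| ≤ _ := habs _ _ _
            _ ≤ 2 * (p:ℝ) + 1 + 1 := by gcongr
      _ ≤ 3 * (p : ℝ) * (1 + (p : ℝ) * θ) := by
          have hpθ2 : (p:ℝ) * (π/2) ≤ (p:ℝ) * θ := mul_le_mul_of_nonneg_left hθ.le (by positivity)
          have hq : (3:ℝ)/2 * (p:ℝ) ≤ (p:ℝ) * θ := by nlinarith
          have hq2 := mul_le_mul_of_nonneg_left hq (by positivity : (0:ℝ) ≤ (p:ℝ))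
          nlinarith
end

section
/- Let K ≥ 0, Q ≥ 1, N ≥ 1, (c_p) supported in [−QN, QN] with |c_p| ≤ K, |c_p − c_{p−1}| ≤ K/N, |c_p − 2c_{p−1} + c_{p−2}| ≤ K/N². For t ∈ ℝ and m ∈ ℤ with |m| ≤ 2QN, define σ_m = Σ_p conj(c_p)·c_{p+m}·e^{i·2mtp}. Then |σ_m| ≤ C·K²·NQ/(1 + N·dist(mt/π, ℤ))² for an absolute constant C. -/
open Real Complex Finset

private lemma shift_sum (z : ℂ) (hz : z ≠ 0) (R : ℤ) (g : ℤ → ℂ)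
    (hg : ∀ p : ℤ, g p ≠ 0 → p ∈ Finset.Icc (-R) (R + 2)) :
    ∑ p ∈ Finset.Icc (-R - 4) (R + 4), g (p - 1) * z ^ p
      = z * ∑ p ∈ Finset.Icc (-R - 4) (R + 4), g p * z ^ p := by
  calc ∑ p ∈ Finset.Icc (-R - 4) (R + 4), g (p - 1) * z ^ p
      = ∑ p ∈ Finset.Icc (-R + 1) (R + 3), g (p - 1) * z ^ p := by
        refine (Finset.sum_subset ?_ ?_).symm
        · intro p hp; simp only [Finset.mem_Icc] at *; omega
        · intro p hp hnp
          by_cases h : g (p - 1) = 0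
          · simp [h]
          · exact absurd (hg _ h) (by simp only [Finset.mem_Icc] at *; omega)
    _ = ∑ q ∈ Finset.Icc (-R) (R + 2), g q * z ^ (q + 1) := by
        refine Finset.sum_nbij' (fun p => p - 1) (fun q => q + 1) ?_ ?_ ?_ ?_ ?_
        · intro a ha; simp only [Finset.mem_Icc] at *; omega
        · intro a ha; simp only [Finset.mem_Icc] at *; omega
        · intro a _; omega
        · intro a _; omega
        · intro a _; rw [sub_add_cancel]
    _ = ∑ q ∈ Finset.Icc (-R) (R + 2), z * (g q * z ^ q) := by
        refine Finset.sum_congr rfl fun q _ => ?_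
        rw [zpow_add_one₀ hz]; ring
    _ = z * ∑ q ∈ Finset.Icc (-R) (R + 2), g q * z ^ q := by rw [Finset.mul_sum]
    _ = z * ∑ p ∈ Finset.Icc (-R - 4) (R + 4), g p * z ^ p := by
        congr 1
        refine Finset.sum_subset ?_ ?_
        · intro p hp; simp only [Finset.mem_Icc] at *; omega
        · intro p hp hnp
          by_cases h : g p = 0
          · simp [h]
          · exact absurd (hg _ h) hnp

private lemma norm_one_sub_exp (w : ℝ) :
    ‖(1 : ℂ) - Complex.exp (Complex.I * ((2 * w : ℝ) : ℂ))‖ = 2 * |Real.sin w| := by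
  have hz_eq : (1 : ℂ) - Complex.exp (Complex.I * ((2 * w : ℝ) : ℂ))
      = ((1 - Real.cos (2 * w) : ℝ) : ℂ) + ((-Real.sin (2 * w) : ℝ) : ℂ) * Complex.I := by
    rw [show Complex.I * ((2 * w : ℝ) : ℂ) = ((2 * w : ℝ) : ℂ) * Complex.I from by ring,
      Complex.exp_mul_I]
    push_cast
    ring
  rw [hz_eq, Complex.norm_add_mul_I]
  rw [show (1 - Real.cos (2 * w)) ^ 2 + (-Real.sin (2 * w)) ^ 2 = (2 * Real.sin w) ^ 2 from by
    rw [Real.cos_two_mul, Real.sin_two_mul]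
    linear_combination (4 * Real.cos w ^ 2 - 4) * Real.sin_sq_add_cos_sq w]
  rw [Real.sqrt_sq_eq_abs, abs_mul]
  norm_num

private lemma dist_le_abs_sin (w : ℝ) : 2 * |w / π - round (w / π)| ≤ |Real.sin w| := by
  set r : ℤ := round (w / π) with hr
  set δ : ℝ := w / π - r with hδ
  have hd2 : |δ| ≤ 1 / 2 := abs_sub_round (w / π)
  have hw_eq : w = δ * π + r * π := by
    rw [hδ]; field_simp; ring
  have h1 : Real.sin w = (-1) ^ r * Real.sin (δ * π) := by
    rw [hw_eq, Real.sin_add_int_mul_pi]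
  have habs1 : |((-1 : ℝ)) ^ r| = 1 := by
    rcases Int.even_or_odd r with he | ho
    · rw [he.neg_one_zpow]; norm_num
    · rw [ho.neg_one_zpow]; norm_num
  have h2 : |Real.sin w| = |Real.sin (δ * π)| := by
    rw [h1, abs_mul, habs1, one_mul]
  have h3 : |Real.sin (δ * π)| = |Real.sin (|δ| * π)| := by
    rcases abs_cases δ with ⟨h, _⟩ | ⟨h, _⟩
    · rw [h]
    · rw [h]; rw [show -δ * π = -(δ * π) from by ring, Real.sin_neg, abs_neg]
  have h4 : 2 * |δ| ≤ Real.sin (|δ| * π) := by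
    have := Real.mul_le_sin (x := |δ| * π) (by positivity) (by nlinarith [Real.pi_pos])
    calc 2 * |δ| = 2 / π * (|δ| * π) := by field_simp
    _ ≤ Real.sin (|δ| * π) := this
  rw [h2, h3]
  exact h4.trans (le_abs_self _)

set_option maxHeartbeats 2000000 in
/-- Autocorrelation bound for Weyl sums with smooth coefficients: with
`σ_m = Σ_p conj(c_p)·c_{p+m}·e^{2imtp}` and `dist(x,ℤ) = |x − round x|`,
`|σ_m| ≤ C·K²·NQ/(1 + N·dist(mt/π, ℤ))²`. -/
theorem weyl_autocorrelation_bound :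
    ∃ C > 0, ∀ (K Q N : ℝ) (c : ℤ → ℂ) (t : ℝ) (m : ℤ),
      0 ≤ K → 1 ≤ Q → 1 ≤ N →
      (∀ p : ℤ, c p ≠ 0 → |(p : ℝ)| ≤ Q * N) →
      (∀ p : ℤ, ‖c p‖ ≤ K) →
      (∀ p : ℤ, ‖c p - c (p - 1)‖ ≤ K / N) →
      (∀ p : ℤ, ‖c p - 2 * c (p - 1) + c (p - 2)‖ ≤ K / N ^ 2) →
      |(m : ℝ)| ≤ 2 * Q * N →
      ‖∑ᶠ p : ℤ, (starRingEnd ℂ) (c p) * c (p + m)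
            * Complex.exp (Complex.I * (2 * (m : ℝ) * t * (p : ℝ) : ℝ))‖
        ≤ C * K ^ 2 * N * Q
            / (1 + N * |(m : ℝ) * t / π - round ((m : ℝ) * t / π)|) ^ 2 := by
  refine ⟨100, by norm_num, ?_⟩
  intro K Q N c t m hK hQ hN hsupp hbd hd1 hd2 hm
  have hNpos : (0 : ℝ) < N := lt_of_lt_of_le one_pos hN
  have hQpos : (0 : ℝ) < Q := lt_of_lt_of_le one_pos hQ
  have hQN1 : (1 : ℝ) ≤ Q * N := by nlinarith
  set w : ℝ := (m : ℝ) * t with hw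
  set z : ℂ := Complex.exp (Complex.I * ((2 * w : ℝ) : ℂ)) with hzdef
  have hz0 : z ≠ 0 := Complex.exp_ne_zero _
  have hz1 : ‖z‖ = 1 := by
    rw [hzdef, show Complex.I * ((2 * w : ℝ) : ℂ) = ((2 * w : ℝ) : ℂ) * Complex.I from by ring]
    exact Complex.norm_exp_ofReal_mul_I _
  set f : ℤ → ℂ := fun p => (starRingEnd ℂ) (c p) * c (p + m) with hf
  set R : ℤ := ⌈Q * N⌉ with hR
  have hR1 : (1 : ℤ) ≤ R := by
    rw [hR]; exact_mod_cast Int.one_le_ceil_iff.mpr (by linarith)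
  have hRle : (R : ℝ) ≤ Q * N + 1 := (Int.ceil_lt_add_one _).le
  have hRge : Q * N ≤ (R : ℝ) := Int.le_ceil _
  have hfsupp : ∀ p : ℤ, f p ≠ 0 → p ∈ Finset.Icc (-R) R := by
    intro p hp
    have hcp : c p ≠ 0 := by
      intro h; apply hp; rw [hf]; simp [h]
    have := hsupp p hcp
    rw [abs_le] at this
    rw [Finset.mem_Icc]
    constructor
    · have : -(R : ℝ) ≤ (p : ℝ) := by linarith [hRge, this.1]
      exact_mod_cast this
    · have : (p : ℝ) ≤ (R : ℝ) := by linarith [hRge, this.2]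
      exact_mod_cast this
  set S : Finset ℤ := Finset.Icc (-R - 4) (R + 4) with hS
  have hsub : ∀ p : ℤ, p ∈ Finset.Icc (-R) R → p ∈ S := by
    intro p hp; rw [hS]; simp only [Finset.mem_Icc] at *; omega
  -- convert the finsum
  have hexp : ∀ p : ℤ, Complex.exp (Complex.I * ((2 * (m : ℝ) * t * (p : ℝ) : ℝ) : ℂ)) = z ^ p := by
    intro p
    rw [hzdef, ← Complex.exp_int_mul]
    congr 1
    push_cast [hw]
    ring
  have hfin : ‖∑ᶠ p : ℤ, (starRingEnd ℂ) (c p) * c (p + m)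
      * Complex.exp (Complex.I * (2 * (m : ℝ) * t * (p : ℝ) : ℝ))‖
      = ‖∑ p ∈ S, f p * z ^ p‖ := by
    congr 1
    rw [finsum_eq_sum_of_support_subset _ (s := S)]
    · exact Finset.sum_congr rfl fun p _ => by rw [hexp p]
    · intro p hp
      simp only [Function.mem_support] at hp
      have : f p ≠ 0 := by
        intro h
        apply hp
        rw [hf] at h
        simp only at h
        rw [h, zero_mul]
      exact hsub p (hfsupp p this)
  rw [hfin]
  -- basic bounds
  have hcard : ((S.card : ℝ)) ≤ 13 * Q * N := by
    have h1 : S.card = (2 * R + 9).toNat := by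
      rw [hS, Int.card_Icc]; congr 1; ring
    have h2 : ((S.card : ℝ)) = ((2 * R + 9 : ℤ) : ℝ) := by
      rw [h1]; exact_mod_cast Int.toNat_of_nonneg (show (0:ℤ) ≤ 2 * R + 9 by omega)
    rw [h2]; push_cast; nlinarith
  have hfK : ∀ p : ℤ, ‖f p‖ ≤ K ^ 2 := by
    intro p
    rw [hf]
    simp only []
    rw [norm_mul, RingHomIsometric.norm_map]
    calc ‖c p‖ * ‖c (p + m)‖ ≤ K * K := by
          apply mul_le_mul (hbd p) (hbd _) (norm_nonneg _) hK
    _ = K ^ 2 := (sq K).symm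
  have hznorm : ∀ p : ℤ, ‖z ^ p‖ = 1 := by
    intro p; rw [norm_zpow, hz1, one_zpow]
  have htriv : ‖∑ p ∈ S, f p * z ^ p‖ ≤ 13 * Q * N * K ^ 2 := by
    calc ‖∑ p ∈ S, f p * z ^ p‖ ≤ ∑ p ∈ S, ‖f p * z ^ p‖ := norm_sum_le _ _
    _ ≤ ∑ p ∈ S, K ^ 2 := by
        refine Finset.sum_le_sum fun p _ => ?_
        rw [norm_mul, hznorm p, mul_one]; exact hfK p
    _ = S.card * K ^ 2 := by rw [Finset.sum_const, nsmul_eq_mul]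
    _ ≤ 13 * Q * N * K ^ 2 := by nlinarith [sq_nonneg K]
  -- summation by parts machinery
  have step : ∀ (g : ℤ → ℂ), (∀ p : ℤ, g p ≠ 0 → p ∈ Finset.Icc (-R) (R + 2)) →
      ∑ p ∈ S, (g p - g (p - 1)) * z ^ p = (1 - z) * ∑ p ∈ S, g p * z ^ p := by
    intro g hg
    have h := shift_sum z hz0 R g hg
    rw [hS]
    simp only [sub_mul]
    rw [Finset.sum_sub_distrib, h]
    ring
  have hfsupp' : ∀ p : ℤ, f p ≠ 0 → p ∈ Finset.Icc (-R) (R + 2) := fun p hp => by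
    have := hfsupp p hp; simp only [Finset.mem_Icc] at *; omega
  have hg1supp : ∀ p : ℤ, (f p - f (p - 1)) ≠ 0 → p ∈ Finset.Icc (-R) (R + 2) := by
    intro p hp
    by_cases h1 : f p = 0
    · by_cases h2 : f (p - 1) = 0
      · exact absurd (by rw [h1, h2, sub_zero]) hp
      · have := hfsupp (p - 1) h2; simp only [Finset.mem_Icc] at *; omega
    · have := hfsupp p h1; simp only [Finset.mem_Icc] at *; omega
  have key : ∑ p ∈ S, (f p - f (p - 1) - (f (p - 1) - f (p - 1 - 1))) * z ^ p
      = (1 - z) ^ 2 * ∑ p ∈ S, f p * z ^ p := by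
    have k2 := step (fun p => f p - f (p - 1)) hg1supp
    rw [k2, step f hfsupp']
    ring
  -- pointwise bound on second differences
  have hg2bd : ∀ p : ℤ, ‖f p - f (p - 1) - (f (p - 1) - f (p - 1 - 1))‖ ≤ 4 * K ^ 2 / N ^ 2 := by
    intro p
    have hid : f p - f (p - 1) - (f (p - 1) - f (p - 1 - 1)) =
        ((starRingEnd ℂ) (c p) - (starRingEnd ℂ) (c (p - 2))) * (c (p + m) - c (p + m - 1))
        + (starRingEnd ℂ) (c (p - 2)) * (c (p + m) - 2 * c (p + m - 1) + c (p + m - 2))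
        + ((starRingEnd ℂ) (c p) - 2 * (starRingEnd ℂ) (c (p - 1))
            + (starRingEnd ℂ) (c (p - 2))) * c (p + m - 1) := by
      rw [hf]
      simp only []
      rw [show p - 1 + m = p + m - 1 from by ring, show p - 1 - 1 + m = p + m - 2 from by ring,
        show p - 1 - 1 = p - 2 from by ring]
      ring
    rw [hid]
    have n1 : ‖(starRingEnd ℂ) (c p) - (starRingEnd ℂ) (c (p - 2))‖ ≤ 2 * (K / N) := by
      rw [← map_sub, RingHomIsometric.norm_map]
      calc ‖c p - c (p - 2)‖ ≤ ‖c p - c (p - 1)‖ + ‖c (p - 1) - c (p - 2)‖ := by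
            rw [show c p - c (p - 2) = (c p - c (p - 1)) + (c (p - 1) - c (p - 2)) from by ring]
            exact norm_add_le _ _
      _ ≤ K / N + K / N := add_le_add (hd1 p)
            (by have := hd1 (p - 1); rwa [show p - 1 - 1 = p - 2 from by ring] at this)
      _ = 2 * (K / N) := by ring
    have n2 : ‖c (p + m) - c (p + m - 1)‖ ≤ K / N := hd1 (p + m)
    have n3 : ‖c (p + m) - 2 * c (p + m - 1) + c (p + m - 2)‖ ≤ K / N ^ 2 := hd2 (p + m)
    have n4 : ‖(starRingEnd ℂ) (c p) - 2 * (starRingEnd ℂ) (c (p - 1))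
        + (starRingEnd ℂ) (c (p - 2))‖ ≤ K / N ^ 2 := by
      rw [show (starRingEnd ℂ) (c p) - 2 * (starRingEnd ℂ) (c (p - 1))
          + (starRingEnd ℂ) (c (p - 2)) = (starRingEnd ℂ) (c p - 2 * c (p - 1) + c (p - 2)) from by
        rw [map_add, map_sub, map_mul, map_ofNat]]
      rw [RingHomIsometric.norm_map]
      exact hd2 p
    have m1 : ‖((starRingEnd ℂ) (c p) - (starRingEnd ℂ) (c (p - 2)))
        * (c (p + m) - c (p + m - 1))‖ ≤ 2 * (K / N) * (K / N) := by
      rw [norm_mul]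
      exact mul_le_mul n1 n2 (norm_nonneg _) (by positivity)
    have m2 : ‖(starRingEnd ℂ) (c (p - 2))
        * (c (p + m) - 2 * c (p + m - 1) + c (p + m - 2))‖ ≤ K * (K / N ^ 2) := by
      rw [norm_mul, RingHomIsometric.norm_map]
      exact mul_le_mul (hbd _) n3 (norm_nonneg _) hK
    have m3 : ‖((starRingEnd ℂ) (c p) - 2 * (starRingEnd ℂ) (c (p - 1))
        + (starRingEnd ℂ) (c (p - 2))) * c (p + m - 1)‖ ≤ K / N ^ 2 * K := by
      rw [norm_mul]
      exact mul_le_mul n4 (hbd _) (norm_nonneg _) (by positivity)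
    calc ‖_ + _ + _‖ ≤ ‖_ + _‖ + ‖_‖ := norm_add_le _ _
    _ ≤ ‖_‖ + ‖_‖ + ‖_‖ := add_le_add_left (norm_add_le _ _) _
    _ ≤ 2 * (K / N) * (K / N) + K * (K / N ^ 2) + K / N ^ 2 * K := by
        exact add_le_add (add_le_add m1 m2) m3
    _ = 4 * K ^ 2 / N ^ 2 := by field_simp; ring
  have hsum2 : ‖∑ p ∈ S, (f p - f (p - 1) - (f (p - 1) - f (p - 1 - 1))) * z ^ p‖
      ≤ 13 * Q * N * (4 * K ^ 2 / N ^ 2) := by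
    calc ‖∑ p ∈ S, (f p - f (p - 1) - (f (p - 1) - f (p - 1 - 1))) * z ^ p‖
        ≤ ∑ p ∈ S, ‖(f p - f (p - 1) - (f (p - 1) - f (p - 1 - 1))) * z ^ p‖ := norm_sum_le _ _
    _ ≤ ∑ p ∈ S, 4 * K ^ 2 / N ^ 2 := by
        refine Finset.sum_le_sum fun p _ => ?_
        rw [norm_mul, hznorm p, mul_one]; exact hg2bd p
    _ = S.card * (4 * K ^ 2 / N ^ 2) := by rw [Finset.sum_const, nsmul_eq_mul]
    _ ≤ 13 * Q * N * (4 * K ^ 2 / N ^ 2) := by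
        have : (0:ℝ) ≤ 4 * K ^ 2 / N ^ 2 := by positivity
        exact mul_le_mul_of_nonneg_right hcard this
  -- sine / distance bound
  have hDeq : ‖(1 : ℂ) - z‖ = 2 * |Real.sin w| := by rw [hzdef]; exact norm_one_sub_exp w
  have hDge : 4 * |w / π - (round (w / π) : ℤ)| ≤ ‖(1 : ℂ) - z‖ := by
    rw [hDeq]
    have := dist_le_abs_sin w
    linarith
  -- final assembly
  set d : ℝ := |w / π - (round (w / π) : ℤ)| with hd
  have hd0 : (0:ℝ) ≤ d := abs_nonneg _
  set B : ℂ := ∑ p ∈ S, f p * z ^ p with hB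
  have hXpos : (0:ℝ) < (1 + N * d) ^ 2 := by positivity
  rw [le_div_iff₀ hXpos]
  rcases le_or_gt (N * d) 1 with hc | hc
  · have hX4 : (1 + N * d) ^ 2 ≤ 4 := by nlinarith [mul_nonneg hNpos.le hd0]
    calc ‖B‖ * (1 + N * d) ^ 2 ≤ 13 * Q * N * K ^ 2 * 4 :=
          mul_le_mul htriv hX4 (by positivity) (by positivity)
    _ ≤ 100 * K ^ 2 * N * Q := by
        nlinarith [mul_nonneg (mul_nonneg (sq_nonneg K) hNpos.le) hQpos.le]
  · have hdpos : (0:ℝ) < d := by nlinarith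
    have hkey : ‖(1 : ℂ) - z‖ ^ 2 * ‖B‖
        = ‖∑ p ∈ S, (f p - f (p - 1) - (f (p - 1) - f (p - 1 - 1))) * z ^ p‖ := by
      rw [key, norm_mul, norm_pow]
    have hD2 : 16 * d ^ 2 ≤ ‖(1 : ℂ) - z‖ ^ 2 := by
      nlinarith [hDge, hd0, norm_nonneg ((1 : ℂ) - z)]
    have hA : ‖B‖ * (16 * d ^ 2) ≤ 13 * Q * N * (4 * K ^ 2 / N ^ 2) := by
      calc ‖B‖ * (16 * d ^ 2) ≤ ‖B‖ * ‖(1 : ℂ) - z‖ ^ 2 :=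
            mul_le_mul_of_nonneg_left hD2 (norm_nonneg _)
      _ = ‖(1 : ℂ) - z‖ ^ 2 * ‖B‖ := by ring
      _ = _ := hkey
      _ ≤ 13 * Q * N * (4 * K ^ 2 / N ^ 2) := hsum2
    have hX : (1 + N * d) ^ 2 ≤ 4 * (N * d) ^ 2 := by nlinarith
    have h5 : ‖B‖ * (1 + N * d) ^ 2 ≤ ‖B‖ * (4 * (N * d) ^ 2) :=
      mul_le_mul_of_nonneg_left hX (norm_nonneg _)
    have h6 : ‖B‖ * (4 * (N * d) ^ 2) = (N ^ 2 / 4) * (‖B‖ * (16 * d ^ 2)) := by ring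
    have h7 : (N ^ 2 / 4) * (‖B‖ * (16 * d ^ 2))
        ≤ (N ^ 2 / 4) * (13 * Q * N * (4 * K ^ 2 / N ^ 2)) :=
      mul_le_mul_of_nonneg_left hA (by positivity)
    have h8 : (N ^ 2 / 4) * (13 * Q * N * (4 * K ^ 2 / N ^ 2)) = 13 * K ^ 2 * N * Q := by
      field_simp
    nlinarith [mul_nonneg (mul_nonneg (sq_nonneg K) hNpos.le) hQpos.le]
end

section
/- On the unit sphere S³ ⊂ ℝ⁴ identified with the unit quaternions, identifying radial functions on S³ away from the antipode with radial functions on the ball B(0,π) ⊂ ℝ³ via exponential coordinates, with θ = |x| the distance to the origin and g(θ) = sin(θ)/θ, one has for every smooth radial u on (0,π): (1/sin²θ)·d/dθ(sin²θ · d/dθ(u(θ)/g(θ))) − u(θ)/g(θ) = (1/g(θ))·(1/θ²)·d/dθ(θ²·du/dθ). -/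
open Real

/-- Conjugation identity intertwining the radial spherical Laplacian (shifted by 1)
with the radial Euclidean Laplacian via `g(θ) = sin θ/θ`: for smooth radial `u`
and `θ ∈ (0, π)`,
`(1/sin²θ)·(sin²θ·(u/g)')' − u/g = (1/g)·(1/θ²)·(θ²·u')'`. -/
theorem radial_laplacian_conjugation (u : ℝ → ℝ) (hu : ContDiff ℝ (⊤ : ℕ∞) u)
    (θ : ℝ) (hθ : θ ∈ Set.Ioo 0 π) :
    (1 / sin θ ^ 2)
        * deriv (fun t : ℝ => sin t ^ 2 * deriv (fun s : ℝ => u s / (sin s / s)) t) θ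
      - u θ / (sin θ / θ)
    = (1 / (sin θ / θ)) * ((1 / θ ^ 2) * deriv (fun t : ℝ => t ^ 2 * deriv u t) θ) := by
  obtain ⟨hθ0, hθπ⟩ := hθ
  have hu' : ContDiff ℝ (⊤ : ℕ∞) u := hu.of_le (by simp)
  have hdu : Differentiable ℝ u := hu'.differentiable (by norm_num)
  have hdu' : Differentiable ℝ (deriv u) :=
    (contDiff_infty_iff_deriv.mp hu').2.differentiable (by norm_num)
  -- rewrite the inner quotient
  have hrw : (fun s : ℝ => u s / (sin s / s)) = fun s : ℝ => u s * s / sin s := by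
    funext s; rw [div_div_eq_mul_div]
  -- derivative of the inner function on (0, π)
  have hinner : ∀ t ∈ Set.Ioo (0:ℝ) π,
      deriv (fun s : ℝ => u s / (sin s / s)) t
        = ((deriv u t * t + u t) * sin t - u t * t * cos t) / sin t ^ 2 := by
    intro t ht
    have hsin : sin t ≠ 0 := ne_of_gt (sin_pos_of_pos_of_lt_pi ht.1 ht.2)
    rw [hrw]
    have h1 : HasDerivAt (fun s : ℝ => u s * s) (deriv u t * t + u t) t := by
      have := ((hdu t).hasDerivAt).fun_mul (hasDerivAt_id t)
      simpa [mul_comm] using this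
    have h2 : HasDerivAt (fun s : ℝ => u s * s / sin s)
        (((deriv u t * t + u t) * sin t - u t * t * cos t) / sin t ^ 2) t :=
      h1.div (hasDerivAt_sin t) hsin
    exact h2.deriv
  have hsinθ : sin θ ≠ 0 := ne_of_gt (sin_pos_of_pos_of_lt_pi hθ0 hθπ)
  have hθne : θ ≠ 0 := ne_of_gt hθ0
  -- eventual equality of the outer function with an explicit expression
  have hmem : Set.Ioo (0:ℝ) π ∈ nhds θ := isOpen_Ioo.mem_nhds ⟨hθ0, hθπ⟩
  have hee : (fun t : ℝ => sin t ^ 2 * deriv (fun s : ℝ => u s / (sin s / s)) t)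
      =ᶠ[nhds θ] fun t : ℝ => (deriv u t * t + u t) * sin t - u t * t * cos t := by
    filter_upwards [hmem] with t ht
    have hsin : sin t ≠ 0 := ne_of_gt (sin_pos_of_pos_of_lt_pi ht.1 ht.2)
    rw [hinner t ht]
    field_simp
  -- derivative of the explicit outer expression
  have hF : HasDerivAt (fun t : ℝ => (deriv u t * t + u t) * sin t - u t * t * cos t)
      ((deriv (deriv u) θ * θ + deriv u θ + deriv u θ) * sin θ
        + (deriv u θ * θ + u θ) * cos θ
        - ((deriv u θ * θ + u θ) * cos θ + u θ * θ * (-sin θ))) θ := by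
    have hA : HasDerivAt (fun t : ℝ => deriv u t * t + u t)
        (deriv (deriv u) θ * θ + deriv u θ + deriv u θ) θ := by
      have h1 : HasDerivAt (fun t : ℝ => deriv u t * t)
          (deriv (deriv u) θ * θ + deriv u θ) θ := by
        simpa [mul_comm] using ((hdu' θ).hasDerivAt).fun_mul (hasDerivAt_id θ)
      exact h1.add ((hdu θ).hasDerivAt)
    have hB : HasDerivAt (fun t : ℝ => u t * t * cos t)
        ((deriv u θ * θ + u θ) * cos θ + u θ * θ * (-sin θ)) θ := by
      have h1 : HasDerivAt (fun t : ℝ => u t * t) (deriv u θ * θ + u θ) θ := by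
        simpa [mul_comm] using ((hdu θ).hasDerivAt).fun_mul (hasDerivAt_id θ)
      exact h1.mul (hasDerivAt_cos θ)
    exact (hA.mul (hasDerivAt_sin θ)).sub hB
  have hLHS : deriv (fun t : ℝ => sin t ^ 2 * deriv (fun s : ℝ => u s / (sin s / s)) t) θ
      = (deriv (deriv u) θ * θ + 2 * deriv u θ + u θ * θ) * sin θ := by
    rw [hee.deriv_eq, hF.deriv]; ring
  -- derivative of the RHS function
  have hRHS : deriv (fun t : ℝ => t ^ 2 * deriv u t) θ
      = 2 * θ * deriv u θ + θ ^ 2 * deriv (deriv u) θ := by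
    have h : HasDerivAt (fun t : ℝ => t ^ 2 * deriv u t)
        (2 * θ * deriv u θ + θ ^ 2 * deriv (deriv u) θ) θ := by
      have h1 : HasDerivAt (fun t : ℝ => t ^ 2) (2 * θ) θ := by
        simpa using hasDerivAt_pow 2 θ
      simpa using h1.fun_mul ((hdu' θ).hasDerivAt)
    exact h.deriv
  rw [hLHS, hRHS]
  field_simp
  ring
end

section
/- There exists C > 0 such that for every radial H¹ function u on the ball B(0,π) ⊂ ℝ³ vanishing at the boundary |x| = π, one has (|x|/(π − |x|))^{1/2}·|u(x)| ≤ C·‖∇u‖_{L²(B(0,π))} for all x ≠ 0. -/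
open Real MeasureTheory

section Aux

/-- Cauchy–Schwarz for interval integrals of continuous functions. -/
lemma cs_interval {f : ℝ → ℝ} (hf : Continuous f) {a b : ℝ} (hab : a ≤ b) :
    (∫ s in a..b, f s) ^ 2 ≤ (b - a) * ∫ s in a..b, f s ^ 2 := by
  rcases eq_or_lt_of_le hab with rfl | h
  · simp
  set T := ∫ s in a..b, f s with hT
  set c : ℝ := T / (b - a) with hc
  have hd : (0:ℝ) < b - a := by linarith
  have h0 : 0 ≤ ∫ s in a..b, (f s - c) ^ 2 :=
    intervalIntegral.integral_nonneg hab fun s _ => sq_nonneg _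
  have hexp : ∫ s in a..b, (f s - c) ^ 2
      = (∫ s in a..b, f s ^ 2) - 2 * c * T + c ^ 2 * (b - a) := by
    have hint1 : IntervalIntegrable (fun s => f s ^ 2) volume a b :=
      (hf.pow 2).intervalIntegrable a b
    have hint2 : IntervalIntegrable (fun s => 2 * c * f s) volume a b :=
      (continuous_const.mul hf).intervalIntegrable a b
    have : (fun s => (f s - c) ^ 2) = fun s => (f s ^ 2 - 2 * c * f s) + c ^ 2 := by
      funext s; ring
    rw [this, intervalIntegral.integral_add (hint1.sub hint2)
        (intervalIntegrable_const), intervalIntegral.integral_sub hint1 hint2,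
      intervalIntegral.integral_const_mul, intervalIntegral.integral_const]
    rw [← hT]
    simp only [smul_eq_mul]
    ring
  have hcT : c * (b - a) = T := by
    rw [hc]; field_simp
  nlinarith [sq_nonneg (T - c * (b - a))]

lemma aux_alg {p v b : ℝ} (hv : v ≠ 0) (hp : p ≠ 0) :
    2 * b / p = (2 / (3 * p * v)) * (3 * v * b) := by
  field_simp

end Aux

set_option maxHeartbeats 2000000 in
/-- Radial Sobolev (Strauss) inequality on the ball `B(0,π) ⊂ ℝ³` with Dirichlet
boundary condition: for radial `u` vanishing on `|x| = π`,
`(|x|/(π − |x|))^{1/2}·|u(x)| ≤ C·‖∇u‖_{L²(B(0,π))}`. -/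
theorem radial_sobolev_ball :
    ∃ C > 0, ∀ (u : EuclideanSpace ℝ (Fin 3) → ℝ) (w : ℝ → ℝ),
      ContDiff ℝ 1 u →
      (∀ x, u x = w ‖x‖) →
      (∀ x : EuclideanSpace ℝ (Fin 3), ‖x‖ = π → u x = 0) →
      ∀ x : EuclideanSpace ℝ (Fin 3), x ≠ 0 → ‖x‖ < π →
        Real.sqrt (‖x‖ / (π - ‖x‖)) * |u x|
          ≤ C * Real.sqrt (∫ y in Metric.ball (0 : EuclideanSpace ℝ (Fin 3)) π,
              ‖fderiv ℝ u y‖ ^ 2) := by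
  set V : ℝ := (volume (Metric.ball (0 : EuclideanSpace ℝ (Fin 3)) 1)).toReal with hVdef
  have hV : 0 < V := by
    refine ENNReal.toReal_pos ?_ ?_
    · exact (Metric.measure_ball_pos volume (0 : EuclideanSpace ℝ (Fin 3)) one_pos).ne'
    · exact measure_ball_lt_top.ne
  have hC2pos : (0:ℝ) < 2 / (3 * π * V) := by positivity
  refine ⟨Real.sqrt (2 / (3 * π * V)), Real.sqrt_pos.mpr hC2pos, ?_⟩
  intro u w hu hrad hbd x hx0 hxπ
  -- a unit vector
  set e : EuclideanSpace ℝ (Fin 3) := EuclideanSpace.single (0 : Fin 3) (1 : ℝ) with hedef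
  have he : ‖e‖ = 1 := by rw [hedef, EuclideanSpace.norm_single]; norm_num
  have hnorm : ∀ s : ℝ, 0 ≤ s → ‖s • e‖ = s := by
    intro s hs
    rw [norm_smul, he, mul_one, Real.norm_of_nonneg hs]
  have hud : Differentiable ℝ u := hu.differentiable (by norm_num)
  -- profile along the ray
  set f : ℝ → ℝ := fun s => u (s • e) with hfdef
  set p : ℝ → ℝ := fun s => (fderiv ℝ u (s • e)) e with hpdef
  have hline : ∀ s : ℝ, HasDerivAt (fun t : ℝ => t • e) e s := by
    intro s
    simpa using (hasDerivAt_id s).smul_const e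
  have hfd : ∀ s : ℝ, HasDerivAt f (p s) s := fun s =>
    (hud (s • e)).hasFDerivAt.comp_hasDerivAt s (hline s)
  have hsmucont : Continuous fun s : ℝ => s • e := continuous_id.smul continuous_const
  have hfc : Continuous f := hu.continuous.comp hsmucont
  have hpc : Continuous p :=
    ((hu.continuous_fderiv (by norm_num)).comp hsmucont).clm_apply continuous_const
  have hfdnc : Continuous fun s : ℝ => ‖fderiv ℝ u (s • e)‖ :=
    ((hu.continuous_fderiv (by norm_num)).comp hsmucont).norm
  have hfπ : f π = 0 := hbd _ (hnorm π Real.pi_pos.le)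
  -- integration by parts identity
  have key : ∫ s in (0:ℝ)..π, (f s ^ 2 + s * (2 * f s * p s)) = 0 := by
    have hder : ∀ s ∈ Set.uIcc (0:ℝ) π, HasDerivAt (fun t => t * f t ^ 2)
        (f s ^ 2 + s * (2 * f s * p s)) s := by
      intro s _
      have h1 : HasDerivAt (fun t => f t ^ 2) (2 * f s * p s) s := by
        simpa [mul_comm, mul_assoc, pow_one] using (hfd s).fun_pow 2
      simpa using (hasDerivAt_id s).fun_mul h1
    have hint : IntervalIntegrable (fun s => f s ^ 2 + s * (2 * f s * p s)) volume 0 π :=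
      ((hfc.pow 2).add (continuous_id.mul ((continuous_const.mul hfc).mul hpc))).intervalIntegrable 0 π
    rw [intervalIntegral.integral_eq_sub_of_hasDerivAt hder hint]
    simp [hfπ]
  set A : ℝ := ∫ s in (0:ℝ)..π, (f s + s * p s) ^ 2 with hAdef
  have hgpc : Continuous fun s => f s + s * p s := hfc.add (continuous_id.mul hpc)
  have hA : A = ∫ s in (0:ℝ)..π, (s * p s) ^ 2 := by
    have h1 : (fun s => (f s + s * p s) ^ 2)
        = fun s => (f s ^ 2 + s * (2 * f s * p s)) + (s * p s) ^ 2 := by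
      funext s; ring
    have hint1 : IntervalIntegrable (fun s => f s ^ 2 + s * (2 * f s * p s)) volume 0 π :=
      ((hfc.pow 2).add (continuous_id.mul ((continuous_const.mul hfc).mul hpc))).intervalIntegrable 0 π
    have hint2 : IntervalIntegrable (fun s => (s * p s) ^ 2) volume 0 π :=
      ((continuous_id.mul hpc).pow 2).intervalIntegrable 0 π
    rw [hAdef, h1, intervalIntegral.integral_add hint1 hint2, key, zero_add]
  set B : ℝ := ∫ s in (0:ℝ)..π, s ^ 2 * ‖fderiv ℝ u (s • e)‖ ^ 2 with hBdef
  have hAB : A ≤ B := by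
    rw [hA, hBdef]
    refine intervalIntegral.integral_mono_on Real.pi_pos.le
      (((continuous_id.mul hpc).pow 2).intervalIntegrable 0 π)
      (((continuous_id.pow 2).mul (hfdnc.pow 2)).intervalIntegrable 0 π) ?_
    intro s _
    have hle : |p s| ≤ ‖fderiv ℝ u (s • e)‖ := by
      have := (fderiv ℝ u (s • e)).le_opNorm e
      rw [he, mul_one] at this
      simpa using this
    have : p s ^ 2 ≤ ‖fderiv ℝ u (s • e)‖ ^ 2 := by
      rw [← sq_abs]
      exact pow_le_pow_left₀ (abs_nonneg _) hle 2
    calc (s * p s) ^ 2 = s ^ 2 * p s ^ 2 := by ring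
      _ ≤ s ^ 2 * ‖fderiv ℝ u (s • e)‖ ^ 2 :=
        mul_le_mul_of_nonneg_left this (sq_nonneg s)
  -- radial symmetry of the gradient norm
  have hOle : ∀ (O : EuclideanSpace ℝ (Fin 3) ≃ₗᵢ[ℝ] EuclideanSpace ℝ (Fin 3)) (y : EuclideanSpace ℝ (Fin 3)), ‖fderiv ℝ u y‖ ≤ ‖fderiv ℝ u (O y)‖ := by
    intro O y
    have hcomp : (fun z => u (O z)) = u := by
      funext z; rw [hrad (O z), O.norm_map, ← hrad z]
    have hO : HasFDerivAt (fun z => u (O z))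
        ((fderiv ℝ u (O y)).comp O.toLinearIsometry.toContinuousLinearMap) y := by
      have h1 := (hud (O y)).hasFDerivAt
      have h2 := O.toLinearIsometry.toContinuousLinearMap.hasFDerivAt (x := y)
      simpa [Function.comp_def, LinearIsometry.coe_toContinuousLinearMap] using h1.comp y h2
    rw [hcomp] at hO
    rw [hO.fderiv]
    refine le_trans (ContinuousLinearMap.opNorm_comp_le _ _) ?_
    have h3 : ‖O.toLinearIsometry.toContinuousLinearMap‖ ≤ 1 :=
      LinearIsometry.norm_toContinuousLinearMap_le _
    have h4 := norm_nonneg (fderiv ℝ u (O y))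
    nlinarith
  have hOeq : ∀ (O : EuclideanSpace ℝ (Fin 3) ≃ₗᵢ[ℝ] EuclideanSpace ℝ (Fin 3)) (y : EuclideanSpace ℝ (Fin 3)), ‖fderiv ℝ u (O y)‖ = ‖fderiv ℝ u y‖ := by
    intro O y
    refine le_antisymm ?_ (hOle O y)
    simpa using hOle O.symm (O y)
  have hradnorm : ∀ y : EuclideanSpace ℝ (Fin 3), ‖fderiv ℝ u y‖ = ‖fderiv ℝ u (‖y‖ • e)‖ := by
    intro y
    rcases eq_or_ne y 0 with rfl | hy
    · simp
    · have hn : ‖(‖y‖ • e)‖ = ‖y‖ := hnorm _ (norm_nonneg y)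
      set O : EuclideanSpace ℝ (Fin 3) ≃ₗᵢ[ℝ] EuclideanSpace ℝ (Fin 3) := Submodule.reflection (ℝ ∙ ((‖y‖ • e) - y))ᗮ with hOdef
      have hOy : O (‖y‖ • e) = y := Submodule.reflection_sub hn
      calc ‖fderiv ℝ u y‖ = ‖fderiv ℝ u (O (‖y‖ • e))‖ := by rw [hOy]
        _ = ‖fderiv ℝ u (‖y‖ • e)‖ := hOeq O _
  -- spherical coordinates
  set I : ℝ := ∫ y in Metric.ball (0 : EuclideanSpace ℝ (Fin 3)) π, ‖fderiv ℝ u y‖ ^ 2 with hIdef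
  set F : ℝ → ℝ := Set.indicator (Set.Ico 0 π) (fun s => ‖fderiv ℝ u (s • e)‖ ^ 2) with hFdef
  have hGE : ∀ y : EuclideanSpace ℝ (Fin 3),
      Set.indicator (Metric.ball (0 : EuclideanSpace ℝ (Fin 3)) π) (fun z => ‖fderiv ℝ u z‖ ^ 2) y = F ‖y‖ := by
    intro y
    by_cases hy : ‖y‖ < π
    · rw [Set.indicator_of_mem (by simpa [mem_ball_zero_iff] using hy),
        hFdef, Set.indicator_of_mem (Set.mem_Ico.mpr ⟨norm_nonneg y, hy⟩)]
      rw [hradnorm y]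
    · rw [Set.indicator_of_notMem (by simpa [mem_ball_zero_iff] using hy),
        hFdef, Set.indicator_of_notMem (fun hmem => hy hmem.2)]
  have hI : I = 3 * V * B := by
    have h1 : I = ∫ y : EuclideanSpace ℝ (Fin 3), F ‖y‖ := by
      rw [hIdef, ← integral_indicator measurableSet_ball]
      exact integral_congr_ae (Filter.Eventually.of_forall hGE)
    have h2 := MeasureTheory.integral_fun_norm_addHaar (volume : Measure (EuclideanSpace ℝ (Fin 3))) F
    rw [finrank_euclideanSpace_fin] at h2
    have h3 : ∫ y in Set.Ioi (0:ℝ), y ^ (3 - 1) • F y = B := by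
      have heq : ∀ y ∈ Set.Ioi (0:ℝ), y ^ (3 - 1) • F y
          = Set.indicator (Set.Ioo 0 π) (fun s => s ^ 2 * ‖fderiv ℝ u (s • e)‖ ^ 2) y := by
        intro y hy
        have hy0 : (0:ℝ) < y := hy
        by_cases hyπ : y < π
        · rw [hFdef, Set.indicator_of_mem (Set.mem_Ico.mpr ⟨hy0.le, hyπ⟩),
            Set.indicator_of_mem (Set.mem_Ioo.mpr ⟨hy0, hyπ⟩)]
          norm_num [smul_eq_mul]
        · rw [hFdef, Set.indicator_of_notMem (fun hmem => hyπ hmem.2),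
            Set.indicator_of_notMem (fun hmem => hyπ hmem.2)]
          simp
      rw [setIntegral_congr_fun measurableSet_Ioi heq,
        setIntegral_indicator measurableSet_Ioo]
      have hset : Set.Ioi (0:ℝ) ∩ Set.Ioo 0 π = Set.Ioo 0 π := by
        ext t; simp only [Set.mem_inter_iff, Set.mem_Ioi, Set.mem_Ioo]
        exact ⟨fun h => h.2, fun h => ⟨h.1, h⟩⟩
      rw [hset, hBdef, intervalIntegral.integral_of_le Real.pi_pos.le,
        MeasureTheory.integral_Ioc_eq_integral_Ioo]
    rw [h1, h2, h3]
    rw [measureReal_def, ← hVdef]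
    simp only [nsmul_eq_mul, smul_eq_mul]
    ring
  have hBnn : 0 ≤ B := by
    rw [hBdef]
    exact intervalIntegral.integral_nonneg Real.pi_pos.le
      (fun s _ => mul_nonneg (sq_nonneg _) (sq_nonneg _))
  have hInn : 0 ≤ I := by rw [hI]; positivity
  have hAnn : 0 ≤ A := by
    rw [hAdef]
    exact intervalIntegral.integral_nonneg Real.pi_pos.le (fun s _ => sq_nonneg _)
  -- pointwise estimates
  set r : ℝ := ‖x‖ with hrdef
  have hr0 : 0 < r := norm_pos_iff.mpr hx0
  have hrπ : r < π := hxπ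
  have hux : u x = f r := by
    show u x = u (r • e)
    rw [hrad x, hrad (r • e), hnorm r hr0.le, hrdef]
  have hgprim : ∀ s : ℝ, HasDerivAt (fun t => t * f t) (f s + s * p s) s := by
    intro s
    simpa [add_comm] using (hasDerivAt_id s).fun_mul (hfd s)
  have hintA : IntervalIntegrable (fun s => (f s + s * p s) ^ 2) volume 0 π :=
    (hgpc.pow 2).intervalIntegrable 0 π
  have hsub : ∀ a b : ℝ, 0 ≤ a → a ≤ b → b ≤ π →
      (∫ s in a..b, (f s + s * p s) ^ 2) ≤ A := by
    intro a b ha hab hbπ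
    rw [hAdef]
    exact intervalIntegral.integral_mono_interval ha hab hbπ
      (Filter.Eventually.of_forall fun s => sq_nonneg _) hintA
  have hg1 : (r * f r) ^ 2 ≤ r * A := by
    have hfund : r * f r = ∫ s in (0:ℝ)..r, (f s + s * p s) := by
      have := intervalIntegral.integral_eq_sub_of_hasDerivAt
        (f := fun t => t * f t) (f' := fun s => f s + s * p s)
        (fun s _ => hgprim s)
        (hgpc.intervalIntegrable 0 r)
      rw [this]; ring
    calc (r * f r) ^ 2 = (∫ s in (0:ℝ)..r, (f s + s * p s)) ^ 2 := by rw [hfund]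
      _ ≤ (r - 0) * ∫ s in (0:ℝ)..r, (f s + s * p s) ^ 2 := cs_interval hgpc hr0.le
      _ = r * ∫ s in (0:ℝ)..r, (f s + s * p s) ^ 2 := by ring_nf
      _ ≤ r * A := mul_le_mul_of_nonneg_left (hsub 0 r le_rfl hr0.le hrπ.le) hr0.le
  have hg2 : (r * f r) ^ 2 ≤ (π - r) * A := by
    have hfund : ∫ s in r..π, (f s + s * p s) = - (r * f r) := by
      have := intervalIntegral.integral_eq_sub_of_hasDerivAt
        (f := fun t => t * f t) (f' := fun s => f s + s * p s)
        (fun s _ => hgprim s)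
        (hgpc.intervalIntegrable r π)
      rw [this]
      show π * f π - r * f r = -(r * f r)
      rw [hfπ]; ring
    calc (r * f r) ^ 2 = (∫ s in r..π, (f s + s * p s)) ^ 2 := by rw [hfund]; ring
      _ ≤ (π - r) * ∫ s in r..π, (f s + s * p s) ^ 2 := cs_interval hgpc hrπ.le
      _ ≤ (π - r) * A :=
        mul_le_mul_of_nonneg_left (hsub r π hr0.le hrπ.le le_rfl) (by linarith)
  -- combine
  have hmin : (r * f r) ^ 2 * π ≤ (r * (π - r)) * (2 * A) := by
    rcases le_or_gt r (π / 2) with hcase | hcase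
    · nlinarith
    · nlinarith
  have hL2 : (Real.sqrt (r / (π - r)) * |u x|) ^ 2 ≤ (2 / (3 * π * V)) * I := by
    have hππ : 0 < π - r := by linarith
    have hsq : (Real.sqrt (r / (π - r)) * |u x|) ^ 2 = (r / (π - r)) * f r ^ 2 := by
      rw [mul_pow, Real.sq_sqrt (by positivity), sq_abs, hux]
    rw [hsq]
    have h1 : (r / (π - r)) * f r ^ 2 = (r * f r) ^ 2 / (r * (π - r)) := by
      field_simp
    rw [h1]
    have h2 : (r * f r) ^ 2 / (r * (π - r)) ≤ 2 * A / π := by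
      rw [div_le_div_iff₀ (by positivity) Real.pi_pos]
      linarith [hmin]
    have h3 : 2 * A / π ≤ 2 * B / π :=
      (div_le_div_iff_of_pos_right Real.pi_pos).mpr (by linarith)
    have h4 : 2 * B / π = (2 / (3 * π * V)) * I := by
      rw [hI]
      exact aux_alg hV.ne' Real.pi_ne_zero
    exact (h2.trans h3).trans_eq h4
  have hlhs : 0 ≤ Real.sqrt (r / (π - r)) * |u x| :=
    mul_nonneg (Real.sqrt_nonneg _) (abs_nonneg _)
  have hrhs : (2 / (3 * π * V)) * I = (Real.sqrt (2 / (3 * π * V)) * Real.sqrt I) ^ 2 := by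
    rw [mul_pow, Real.sq_sqrt hC2pos.le, Real.sq_sqrt hInn]
  calc Real.sqrt (r / (π - r)) * |u x|
      = Real.sqrt ((Real.sqrt (r / (π - r)) * |u x|) ^ 2) := (Real.sqrt_sq hlhs).symm
    _ ≤ Real.sqrt ((Real.sqrt (2 / (3 * π * V)) * Real.sqrt I) ^ 2) := by
        apply Real.sqrt_le_sqrt
        rw [← hrhs]
        exact hL2
    _ = Real.sqrt (2 / (3 * π * V)) * Real.sqrt I := by
        apply Real.sqrt_sq
        positivity
end
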